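/- arXiv:2005.01314 — 3 statements merged into one kernel-verified Lean document; each statement's English description precedes it below -/
import Mathlib

section
/- Let R be a commutative ring, n ≥ 1, and x_1,…,x_n ∈ R. Then det T(x_1,…,x_n) = Σ_{μ ∈ M(P_n)} (−1)^{|μ|} · Π_{v ∉ V(μ)} x_v, where the sum is over all matchings μ of the path graph P_n (including the empty matching) and the product is over the vertices of P_n not covered by μ. -/
/-- `tridiag x n` is the `n × n` tridiagonal matrix `T(x_1, …, x_n)` whose `(i,i)`-entry
is `x (i+1)` (so the diagonal reads `x 1, …, x n`), whose `(i,j)`-entry is `-1` when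
`|i - j| = 1`, and whose other entries are `0`; equivalently `diag(x) - A(P_n)` for the
path graph `P_n`. -/
def tridiag {R : Type*} [CommRing R] (x : ℕ → R) (n : ℕ) :
    Matrix (Fin n) (Fin n) R :=
  Matrix.of fun i j =>
    if (i : ℕ) = j then x ((i : ℕ) + 1)
    else if (i : ℕ) + 1 = j ∨ (j : ℕ) + 1 = i then -1 else 0

/-- The matchings of the path graph `P_n` on vertices `0, …, n-1`: a matching is
encoded by the set `μ` of indices `i < n - 1` of its edges `{i, i+1}`, no two of
which may be consecutive. -/
def pathMatchings (n : ℕ) : Finset (Finset ℕ) :=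
  (Finset.range (n - 1)).powerset.filter (fun μ => ∀ i ∈ μ, i + 1 ∉ μ)

/-- The set of vertices of `P_n` covered by a matching `μ` (the edge with index `i`
covers vertices `i` and `i + 1`). -/
def coveredVertices (μ : Finset ℕ) : Finset ℕ :=
  μ ∪ μ.image (· + 1)

/-!
Expanding `det T(x_1, …, x_{n+2})` along its last row gives the continuant recurrence
`det T_{n+2} = x_{n+2} det T_{n+1} - det T_n`. The signed matching sum obeys the same recurrence:
a matching of `P_{n+2}` either leaves the last vertex uncovered, and is then a matching of
`P_{n+1}` with one extra factor `x_{n+2}`, or contains the last edge `{n, n+1}`, and is then a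
matching of `P_n` plus one edge, which flips the sign. Both sides agree for `n = 0, 1`.
-/

section

open Finset Matrix

variable {R : Type*} [CommRing R] (x : ℕ → R)

theorem tridiag_apply_of_succ_lt {n : ℕ} {i j : Fin n} (h : (i : ℕ) + 1 < j ∨ (j : ℕ) + 1 < i) :
    tridiag x n i j = 0 := by
  simp only [tridiag, of_apply]
  rw [if_neg (by omega), if_neg (by omega)]

theorem tridiag_submatrix_castSucc (n : ℕ) :
    (tridiag x (n + 1)).submatrix Fin.castSucc Fin.castSucc = tridiag x n := by
  ext i j
  simp [tridiag]

-- The minor of `T(x_1, …, x_{n+2})` at the entry `(n+1, n)`; its last column vanishes except for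
-- the `-1` in its last row, whose own minor is `T(x_1, …, x_n)`.
theorem det_tridiag_submatrix_castSucc_succAbove (n : ℕ) :
    ((tridiag x (n + 2)).submatrix Fin.castSucc (Fin.last n).castSucc.succAbove).det =
      -(tridiag x n).det := by
  rw [det_succ_column _ (Fin.last n), Fin.sum_univ_castSucc]
  have hzero (i : Fin n) : (tridiag x (n + 2)).submatrix Fin.castSucc
      (Fin.last n).castSucc.succAbove i.castSucc (Fin.last n) = 0 :=
    tridiag_apply_of_succ_lt x (by simp)
  have hminor : ((tridiag x (n + 2)).submatrix Fin.castSucc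
      (Fin.last n).castSucc.succAbove).submatrix (Fin.last n).succAbove
      (Fin.last n).succAbove = tridiag x n := by
    ext i j
    simp [Fin.succAbove_castSucc_of_lt _ _ (Fin.castSucc_lt_last _), tridiag]
  simp only [hzero, hminor, mul_zero, zero_mul, sum_const_zero, zero_add]
  simp [tridiag, ← two_mul, pow_mul]

theorem det_tridiag_succ_succ (n : ℕ) :
    (tridiag x (n + 2)).det = x (n + 2) * (tridiag x (n + 1)).det - (tridiag x n).det := by
  rw [det_succ_row _ (Fin.last _), Fin.sum_univ_castSucc, Fin.sum_univ_castSucc]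
  have hzero (j : Fin n) : tridiag x (n + 2) (Fin.last (n + 1)) j.castSucc.castSucc = 0 :=
    tridiag_apply_of_succ_lt x (by simp)
  simp only [hzero, mul_zero, zero_mul, sum_const_zero, zero_add, Fin.succAbove_last,
    tridiag_submatrix_castSucc, det_tridiag_submatrix_castSucc_succAbove]
  simp [tridiag, ← two_mul, pow_mul]
  ring

theorem mem_pathMatchings {n : ℕ} {μ : Finset ℕ} :
    μ ∈ pathMatchings n ↔ (∀ i ∈ μ, i + 1 < n) ∧ ∀ i ∈ μ, i + 1 ∉ μ := by
  simp only [pathMatchings, mem_filter, mem_powerset, subset_iff, mem_range]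
  refine and_congr (forall₂_congr fun i _ => ?_) Iff.rfl
  omega

theorem notMem_of_mem_pathMatchings {n k : ℕ} {μ : Finset ℕ} (hμ : μ ∈ pathMatchings n)
    (hk : n ≤ k + 1) : k ∉ μ := fun h => by
  have := (mem_pathMatchings.1 hμ).1 k h
  omega

theorem pathMatchings_succ_succ (n : ℕ) :
    pathMatchings (n + 2) = pathMatchings (n + 1) ∪ (pathMatchings n).image (insert n) := by
  ext μ
  simp only [mem_union, mem_image, mem_pathMatchings]
  constructor
  · rintro ⟨hlt, hsep⟩
    by_cases hn : n ∈ μ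
    · refine .inr ⟨μ.erase n, ?_, insert_erase hn⟩
      simp only [mem_erase]
      grind
    · exact .inl ⟨fun i hi => by grind, hsep⟩
  · rintro (⟨hlt, hsep⟩ | ⟨ν, ⟨hlt, hsep⟩, rfl⟩)
    · exact ⟨fun i hi => (hlt i hi).trans (by omega), hsep⟩
    · simp only [mem_insert, forall_eq_or_imp]
      grind

theorem coveredVertices_insert (i : ℕ) (μ : Finset ℕ) :
    coveredVertices (insert i μ) = insert i (insert (i + 1) (coveredVertices μ)) := by
  ext v
  simp only [coveredVertices, mem_union, mem_insert, image_insert]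
  tauto

theorem coveredVertices_subset_range {n : ℕ} {μ : Finset ℕ} (hμ : μ ∈ pathMatchings n) :
    coveredVertices μ ⊆ range n := by
  intro v hv
  have hlt := (mem_pathMatchings.1 hμ).1
  simp only [coveredVertices, mem_union, mem_image] at hv
  rcases hv with hv | ⟨i, hi, rfl⟩
  · exact mem_range.2 ((hlt v hv).trans' (by omega))
  · exact mem_range.2 (hlt i hi)

def pathMatchingSum (n : ℕ) : R :=
  ∑ μ ∈ pathMatchings n, (-1 : R) ^ μ.card * ∏ v ∈ range n \ coveredVertices μ, x (v + 1)

theorem pathMatchingSum_succ_succ (n : ℕ) :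
    pathMatchingSum x (n + 2) = x (n + 2) * pathMatchingSum x (n + 1) - pathMatchingSum x n := by
  have hdisj : Disjoint (pathMatchings (n + 1)) ((pathMatchings n).image (insert n)) := by
    simp only [disjoint_left, mem_image, not_exists, not_and]
    exact fun μ hμ ν _ h => notMem_of_mem_pathMatchings hμ le_rfl (h ▸ mem_insert_self n ν)
  have hinj : Set.InjOn (insert n) (pathMatchings n : Set (Finset ℕ)) := fun a ha b hb h => by
    simpa [erase_insert (notMem_of_mem_pathMatchings ha (Nat.le_succ n)),
      erase_insert (notMem_of_mem_pathMatchings hb (Nat.le_succ n))] using congrArg (·.erase n) h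
  have hfree : ∑ μ ∈ pathMatchings (n + 1),
      (-1 : R) ^ μ.card * ∏ v ∈ range (n + 2) \ coveredVertices μ, x (v + 1) =
        x (n + 2) * pathMatchingSum x (n + 1) := by
    rw [pathMatchingSum, mul_sum]
    refine sum_congr rfl fun μ hμ => ?_
    have hn : n + 1 ∉ coveredVertices μ := fun h =>
      lt_irrefl _ (mem_range.1 (coveredVertices_subset_range hμ h))
    rw [range_add_one, insert_sdiff_of_notMem _ hn, prod_insert (by simp)]
    ring
  have hmatched : ∑ μ ∈ pathMatchings n, (-1 : R) ^ (insert n μ).card *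
      ∏ v ∈ range (n + 2) \ coveredVertices (insert n μ), x (v + 1) = -pathMatchingSum x n := by
    rw [pathMatchingSum, ← sum_neg_distrib]
    refine sum_congr rfl fun μ hμ => ?_
    have hrange : range (n + 2) \ coveredVertices (insert n μ) = range n \ coveredVertices μ := by
      ext v
      simp only [coveredVertices_insert, mem_sdiff, mem_insert, mem_range]
      grind
    rw [card_insert_of_notMem (notMem_of_mem_pathMatchings hμ (Nat.le_succ n)), hrange, pow_succ]
    ring
  rw [pathMatchingSum, pathMatchings_succ_succ, sum_union hdisj, sum_image hinj, hfree, hmatched,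
    sub_eq_add_neg]

theorem det_tridiag_eq_pathMatchingSum (n : ℕ) : (tridiag x n).det = pathMatchingSum x n := by
  induction n using Nat.twoStepInduction with
  | zero => simp [pathMatchingSum, show pathMatchings 0 = {∅} by decide, coveredVertices]
  | one => simp [pathMatchingSum, show pathMatchings 1 = {∅} by decide, coveredVertices, tridiag]
  | more n ih₀ ih₁ => rw [det_tridiag_succ_succ, pathMatchingSum_succ_succ, ih₀, ih₁]

end

theorem tridiag_det_eq_sum_matchings_general {R : Type*} [CommRing R] (x : ℕ → R) (n : ℕ) :
    (tridiag x n).det =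
      ∑ μ ∈ pathMatchings n, (-1 : R) ^ μ.card *
        ∏ v ∈ Finset.range n \ coveredVertices μ, x (v + 1) :=
  det_tridiag_eq_pathMatchingSum x n

/-- `det T(x_1, …, x_n) = Σ_{μ ∈ M(P_n)} (-1)^{|μ|} Π_{v ∉ V(μ)} x_v`, the sum running
over all matchings of the path graph `P_n` (including the empty matching), the product
over the vertices of `P_n` not covered by `μ`. -/
theorem tridiag_det_eq_sum_matchings {R : Type*} [CommRing R] (x : ℕ → R) (n : ℕ)
    (hn : 1 ≤ n) :
    (tridiag x n).det =
      ∑ μ ∈ pathMatchings n, (-1 : R) ^ μ.card *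
        ∏ v ∈ Finset.range n \ coveredVertices μ, x (v + 1) :=
  tridiag_det_eq_sum_matchings_general x n
end

section
/- Let n ≥ 1 and let k be an integer. Then the determinant of the n×n tridiagonal matrix T(k,…,k) with all diagonal entries equal to k and off-diagonal entries −1 on the sub- and super-diagonal equals Σ_{i=0}^{⌊n/2⌋} (−1)^i · C(n−i, i) · k^{n−2i}. (For k ≥ 3 this is the number of spanning trees τ(PL_n^k) of the polygon ladder consisting of n polygons each with k sides, and its sandpile group is cyclic of this order.) -/
lemma det_rec (n : ℕ) (k : ℤ) :
    (tridiag (fun _ => k) (n+2)).det =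
      k * (tridiag (fun _ => k) (n+1)).det - (tridiag (fun _ => k) n).det := by
  have hval1 : ∀ j : Fin (n+1), (((1 : Fin (n+2)).succAbove j) : ℕ) =
      if (j : ℕ) = 0 then 0 else (j : ℕ) + 1 := by
    intro j
    simp only [Fin.succAbove, Fin.lt_def, Fin.coe_castSucc, Fin.val_one]
    rw [apply_ite (Fin.val)]
    simp only [Fin.coe_castSucc, Fin.val_succ]
    split_ifs <;> omega
  have h0 : (tridiag (fun _ => k) (n+2)).submatrix Fin.succ (Fin.succAbove 0) =
      tridiag (fun _ => k) (n+1) := by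
    ext i j
    simp only [Matrix.submatrix_apply, Fin.succAbove_zero, tridiag, Matrix.of_apply,
      Fin.val_succ]
    split_ifs <;> first | rfl | omega | tauto
  have h1 : ((tridiag (fun _ => k) (n+2)).submatrix Fin.succ
      (Fin.succAbove 1)).det = -(tridiag (fun _ => k) n).det := by
    rw [Matrix.det_succ_column_zero, Fin.sum_univ_succ]
    have hsub : ((tridiag (fun _ => k) (n+2)).submatrix Fin.succ
        (Fin.succAbove 1)).submatrix (Fin.succAbove 0) Fin.succ =
        tridiag (fun _ => k) n := by
      ext i j
      simp only [Matrix.submatrix_apply, Fin.succAbove_zero, tridiag, Matrix.of_apply,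
        hval1, Fin.val_succ]
      split_ifs <;> first | rfl | omega | tauto
    have hzero : ∀ i : Fin n,
        ((tridiag (fun _ => k) (n+2)).submatrix Fin.succ (Fin.succAbove 1)) i.succ 0 = 0 := by
      intro i
      simp only [Matrix.submatrix_apply, tridiag, Matrix.of_apply, hval1,
        Fin.val_succ, Fin.val_zero]
      norm_num
    have hval : ((tridiag (fun _ => k) (n+2)).submatrix Fin.succ (Fin.succAbove 1)) 0 0 = -1 := by
      simp only [Matrix.submatrix_apply, tridiag, Matrix.of_apply, hval1,
        Fin.val_succ, Fin.val_zero]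
      norm_num
    rw [hval]
    simp only [hzero, mul_zero, zero_mul, Finset.sum_const_zero, add_zero]
    rw [hsub]
    simp
  rw [Matrix.det_succ_row_zero, Fin.sum_univ_succ, Fin.sum_univ_succ, h0]
  have hz : ∀ j : Fin n, (tridiag (fun _ => k) (n+2)) 0 j.succ.succ = 0 := by
    intro j
    simp [tridiag]
  have hv0 : (tridiag (fun _ => k) (n+2)) 0 0 = k := by simp [tridiag]
  have hv1 : (tridiag (fun _ => k) (n+2)) 0 (Fin.succ 0) = -1 := by
    simp [tridiag, Fin.succ_zero_eq_one]
  rw [hv0, hv1]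
  have hsa : (Fin.succ (0 : Fin (n+1))).succAbove = (1 : Fin (n+2)).succAbove := by
    rw [Fin.succ_zero_eq_one]
  rw [hsa, h1]
  simp only [hz, mul_zero, zero_mul, Finset.sum_const_zero, add_zero]
  simp
  ring

lemma S_rec (n : ℕ) (k : ℤ) :
    (∑ i ∈ Finset.range ((n+2)/2+1),
        (-1:ℤ)^i * ((n+2-i).choose i : ℤ) * k^(n+2-2*i))
    = k * (∑ i ∈ Finset.range ((n+1)/2+1),
        (-1:ℤ)^i * ((n+1-i).choose i : ℤ) * k^(n+1-2*i))
      - ∑ i ∈ Finset.range (n/2+1), (-1:ℤ)^i * ((n-i).choose i : ℤ) * k^(n-2*i) := by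
  have hm : (n+2)/2 + 1 = (n/2 + 1) + 1 := by omega
  rw [hm, Finset.sum_range_succ']
  have hsplit : ∀ j ∈ Finset.range (n/2+1),
      (-1:ℤ)^(j+1) * ((n+2-(j+1)).choose (j+1) : ℤ) * k^(n+2-2*(j+1))
      = -((-1:ℤ)^j * ((n-j).choose (j+1) : ℤ) * k^(n-2*j))
        - (-1:ℤ)^j * ((n-j).choose j : ℤ) * k^(n-2*j) := by
    intro j hj
    simp only [Finset.mem_range] at hj
    have h1 : n+2-(j+1) = (n-j)+1 := by omega
    have h2 : n+2-2*(j+1) = n-2*j := by omega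
    rw [h1, h2, Nat.choose_succ_succ]
    push_cast
    ring
  rw [Finset.sum_congr rfl hsplit, Finset.sum_sub_distrib]
  -- now handle k * S(n+1)
  have hk0 : k * ((-1:ℤ)^0 * ((n+1-0).choose 0 : ℤ) * k^(n+1-2*0)) = k^(n+2) := by
    simp [← pow_succ']
  have hkj : ∀ j ∈ Finset.range ((n+1)/2),
      k * ((-1:ℤ)^(j+1) * ((n+1-(j+1)).choose (j+1) : ℤ) * k^(n+1-2*(j+1)))
      = -((-1:ℤ)^j * ((n-j).choose (j+1) : ℤ) * k^(n-2*j)) := by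
    intro j hj
    simp only [Finset.mem_range] at hj
    have h1 : n+1-(j+1) = n-j := by omega
    have h2 : n+1-2*(j+1)+1 = n-2*j := by omega
    rw [h1]
    rw [show k * ((-1:ℤ)^(j+1) * ((n-j).choose (j+1) : ℤ) * k^(n+1-2*(j+1)))
      = (-1:ℤ)^(j+1) * ((n-j).choose (j+1) : ℤ) * k^(n+1-2*(j+1)+1) by ring, h2]
    ring
  have hrhs : k * (∑ i ∈ Finset.range ((n+1)/2+1),
      (-1:ℤ)^i * ((n+1-i).choose i : ℤ) * k^(n+1-2*i))
      = k^(n+2) + ∑ j ∈ Finset.range ((n+1)/2),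
          -((-1:ℤ)^j * ((n-j).choose (j+1) : ℤ) * k^(n-2*j)) := by
    rw [Finset.mul_sum, Finset.sum_range_succ', Finset.sum_congr rfl hkj, hk0]
    ring
  have hext : (∑ j ∈ Finset.range (n/2+1), -((-1:ℤ)^j * ((n-j).choose (j+1) : ℤ) * k^(n-2*j)))
      = ∑ j ∈ Finset.range ((n+1)/2), -((-1:ℤ)^j * ((n-j).choose (j+1) : ℤ) * k^(n-2*j)) := by
    rcases Nat.even_or_odd n with ⟨m, hm2⟩ | ⟨m, hm2⟩
    · have h1 : n/2 + 1 = (n+1)/2 + 1 := by omega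
      rw [h1, Finset.sum_range_succ]
      have hc : (n - (n+1)/2).choose ((n+1)/2 + 1) = 0 :=
        Nat.choose_eq_zero_of_lt (by omega)
      simp [hc]
    · have he : n/2 + 1 = (n+1)/2 := by omega
      rw [he]
  rw [hext, hrhs]
  norm_num
  ring

lemma det_S (n : ℕ) (k : ℤ) :
    (tridiag (fun _ => k) n).det =
      ∑ i ∈ Finset.range (n / 2 + 1),
        (-1 : ℤ) ^ i * (Nat.choose (n - i) i : ℤ) * k ^ (n - 2 * i) := by
  induction n using Nat.strong_induction_on with
  | _ n ih =>
    match n with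
    | 0 => simp [tridiag]
    | 1 =>
      rw [show (tridiag (fun _ => k) 1).det = tridiag (fun _ => k) 1 0 0 from
        Matrix.det_fin_one _]
      simp [tridiag]
    | (m+2) =>
      rw [det_rec, ih (m+1) (by omega), ih m (by omega), S_rec]

/-- The determinant of the `n × n` tridiagonal matrix `T(k, …, k)` with constant
diagonal `k` equals `Σ_{i=0}^{⌊n/2⌋} (-1)^i C(n-i, i) k^{n-2i}`. (For `k ≥ 3` this is
the number of spanning trees `τ(PL_n^k)` of the polygon ladder of `n` `k`-gons, and
its sandpile group is cyclic of this order.) -/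
theorem tridiag_const_det (n : ℕ) (hn : 1 ≤ n) (k : ℤ) :
    (tridiag (fun _ => k) n).det =
      ∑ i ∈ Finset.range (n / 2 + 1),
        (-1 : ℤ) ^ i * (Nat.choose (n - i) i : ℤ) * k ^ (n - 2 * i) :=
  det_S n k
end

section
/- Let t ≥ 3 be an integer and let M_t = t·I_4 − A(C_4) be the 4×4 integer matrix with diagonal entries t and with (i,j)-entry −1 exactly when vertices i and j are adjacent in the 4-cycle C_4. Let g = gcd(2t, t²) (so g = t if t is odd and g = 2t if t is even). Then det M_t = t⁴ − 4t², the cokernel ℤ^4 / M_t ℤ^4 is isomorphic to ℤ/gℤ ⊕ ℤ/((t⁴−4t²)/g)ℤ, and this group is not cyclic. (This is the sandpile group of any plane graph whose weak dual is C_4 and whose four interior faces all have length t.) -/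
/-!
Integer row and column operations reduce `t·I₄ - A(C₄)` to the `2 × 2` matrix
`[[t², -2t], [-2t, t²]]`. Writing `t² = l·g` and `2t = k·g` with `g = gcd(2t, t²)` and
`u·k + v·l = 1`, the unimodular matrix `[[v, -u], [k, l]]` reduces this further to
`diag(g, (l² - k²)·g)`. Since `3 ≤ t ∣ g ∣ (l² - k²)·g`, the orders of the two cyclic factors
are not coprime, so the cokernel is not cyclic.
-/

/-- `c4Matrix t = t·I₄ - A(C₄)`: the `4 × 4` integer matrix with diagonal entries `t`
and `(i,j)`-entry `-1` exactly when vertices `i` and `j` are adjacent in the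
4-cycle `C₄`. -/
def c4Matrix (t : ℤ) : Matrix (Fin 4) (Fin 4) ℤ :=
  !![t, -1, 0, -1; -1, t, -1, 0; 0, -1, t, -1; -1, 0, -1, t]

open Matrix

abbrev Matrix.coker {m n α : Type*} [Fintype n] [CommRing α] (A : Matrix m n α) : Type _ :=
  (m → α) ⧸ LinearMap.range A.mulVecLin

namespace Matrix

variable {m n m' n' α : Type*} [Fintype m] [Fintype n] [Fintype m'] [Fintype n']
  [DecidableEq m] [CommRing α]

-- `(P, S) : A → B` and `(E, T) : B → A` are maps of presentations, and `H` is a homotopy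
-- from `E * P` to `1`.
theorem range_mulVecLin_eq_comap {A : Matrix m n α} {B : Matrix m' n' α} {P : Matrix m' m α}
    {S : Matrix n' n α} {E : Matrix m m' α} {T : Matrix n n' α} {H : Matrix n m α}
    (hPA : P * A = B * S) (hAT : A * T = E * B) (hEP : E * P + A * H = 1) :
    LinearMap.range A.mulVecLin = (LinearMap.range B.mulVecLin).comap P.mulVecLin := by
  ext x
  simp only [LinearMap.mem_range, Submodule.mem_comap, mulVecLin_apply]
  constructor
  · rintro ⟨c, rfl⟩
    exact ⟨S *ᵥ c, by rw [mulVec_mulVec, mulVec_mulVec, hPA]⟩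
  · rintro ⟨y, hy⟩
    refine ⟨T *ᵥ y + H *ᵥ x, ?_⟩
    calc A *ᵥ (T *ᵥ y + H *ᵥ x) = E *ᵥ (B *ᵥ y) + (A * H) *ᵥ x := by
          rw [mulVec_add, mulVec_mulVec, hAT, mulVec_mulVec, mulVec_mulVec]
      _ = (E * P + A * H) *ᵥ x := by rw [hy, mulVec_mulVec, add_mulVec]
      _ = x := by rw [hEP, one_mulVec]

noncomputable def cokerEquivOfHomotopy [DecidableEq m'] {A : Matrix m n α} {B : Matrix m' n' α}
    {P : Matrix m' m α} {S : Matrix n' n α} {E : Matrix m m' α} {T : Matrix n n' α}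
    {H : Matrix n m α} (hPA : P * A = B * S) (hAT : A * T = E * B) (hEP : E * P + A * H = 1)
    (hPE : P * E = 1) : A.coker ≃ₗ[α] B.coker :=
  have hP : Function.Surjective P.mulVecLin :=
    mulVec_surjective_iff_exists_right_inverse.mpr ⟨E, hPE⟩
  (Submodule.quotEquivOfEq _ _ <| by
      rw [range_mulVecLin_eq_comap hPA hAT hEP, LinearMap.ker_comp, Submodule.ker_mkQ]).trans
    ((B.mulVecLin.range.mkQ ∘ₗ P.mulVecLin).quotKerEquivOfSurjective
      ((Submodule.mkQ_surjective _).comp hP))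

theorem mem_range_diagonal_mulVecLin_iff (d y : m → α) :
    y ∈ LinearMap.range (diagonal d).mulVecLin ↔ ∀ i, d i ∣ y i := by
  constructor
  · rintro ⟨c, rfl⟩ i
    exact ⟨c i, by rw [mulVecLin_apply, mulVec_diagonal]⟩
  · intro h
    choose c hc using h
    exact ⟨c, funext fun i ↦ by rw [mulVecLin_apply, mulVec_diagonal, hc i]⟩

end Matrix

noncomputable def cokerDiagonalFinTwoEquiv (a b : ℤ) :
    (diagonal ![a, b]).coker ≃+ ZMod a.natAbs × ZMod b.natAbs := by
  let ψ : (Fin 2 → ℤ) →ₗ[ℤ] ZMod a.natAbs × ZMod b.natAbs :=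
    ((Int.castAddHom _).toIntLinearMap ∘ₗ LinearMap.proj 0).prod
      ((Int.castAddHom _).toIntLinearMap ∘ₗ LinearMap.proj 1)
  have hψ : Function.Surjective ψ := by
    rintro ⟨p, q⟩
    obtain ⟨x, rfl⟩ := ZMod.intCast_surjective p
    obtain ⟨y, rfl⟩ := ZMod.intCast_surjective q
    exact ⟨![x, y], rfl⟩
  have hker : LinearMap.range (diagonal ![a, b]).mulVecLin = LinearMap.ker ψ := by
    ext y
    rw [mem_range_diagonal_mulVecLin_iff, Fin.forall_fin_two, LinearMap.mem_ker, Prod.mk_eq_zero]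
    change _ ↔ (y 0 : ZMod a.natAbs) = 0 ∧ (y 1 : ZMod b.natAbs) = 0
    simp only [ZMod.intCast_zmod_eq_zero_iff_dvd, Int.natAbs_dvd]
    rfl
  exact ((Submodule.quotEquivOfEq _ _ hker).trans (ψ.quotKerEquivOfSurjective hψ)).toAddEquiv

noncomputable def cokerCirculantEquiv {a b g k l u v : ℤ} (ha : a = l * g) (hb : b = k * g)
    (huv : u * k + v * l = 1) :
    !![a, -b; -b, a].coker ≃ₗ[ℤ] (diagonal ![g, (l ^ 2 - k ^ 2) * g]).coker := by
  subst ha hb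
  refine cokerEquivOfHomotopy (P := !![v, -u; k, l]) (S := !![1, -(v * k + u * l); 0, 1])
    (E := !![l, u; -k, v]) (T := !![1, v * k + u * l; 0, 1]) (H := 0) ?_ ?_ ?_ ?_ <;>
  · ext i j; fin_cases i <;> fin_cases j <;> simp [mul_apply, Fin.sum_univ_succ] <;> grind

noncomputable def cokerC4MatrixEquiv (t : ℤ) :
    (c4Matrix t).coker ≃ₗ[ℤ] !![t ^ 2, -(2 * t); -(2 * t), t ^ 2].coker := by
  refine cokerEquivOfHomotopy (P := !![1, 0, -1, t; 0, 1, t, -1]) (S := !![0, 0, 0, 1; 0, 0, 1, 0])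
    (E := !![1, 0; 0, 1; 0, 0; 0, 0]) (T := !![t, -1; -1, t; 0, 1; 1, 0])
    (H := !![0, 0, 0, -1; 0, 0, -1, 0; 0, 0, 0, 0; 0, 0, 0, 0]) ?_ ?_ ?_ ?_ <;>
  · ext i j; fin_cases i <;> fin_cases j <;> simp [c4Matrix, mul_apply, Fin.sum_univ_succ] <;> ring

theorem det_c4Matrix (t : ℤ) : (c4Matrix t).det = t ^ 4 - 4 * t ^ 2 := by
  simp [c4Matrix, det_succ_row_zero, Fin.sum_univ_succ, Fin.succAbove]
  ring

theorem sq_sub_sq_ediv_of_eq_mul {a b g k l : ℤ} (ha : a = l * g) (hb : b = k * g) (hg : g ≠ 0) :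
    (a ^ 2 - b ^ 2) / g = (l ^ 2 - k ^ 2) * g := by
  rw [ha, hb, show (l * g) ^ 2 - (k * g) ^ 2 = (l ^ 2 - k ^ 2) * g * g by ring]
  exact Int.mul_ediv_cancel _ hg

theorem not_isAddCyclic_zmod_prod_of_dvd {m n : ℕ} (hm : m ≠ 1) (hmn : m ∣ n) :
    ¬ IsAddCyclic (ZMod m × ZMod n) := fun h ↦ by
  have hcop := (AddGroup.isAddCyclic_prod_iff.mp h).2.2
  rw [Nat.card_zmod, Nat.card_zmod] at hcop
  exact hm (hcop.eq_one_of_dvd hmn)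

/-- For an integer `t ≥ 3` and `g = gcd(2t, t²)`, the matrix `M_t = t·I₄ - A(C₄)`
satisfies `det M_t = t⁴ - 4t²`, its cokernel `ℤ⁴ / M_t ℤ⁴` is isomorphic to
`ℤ/gℤ ⊕ ℤ/((t⁴ - 4t²)/g)ℤ`, and this group is not cyclic. (It is the sandpile group
of any plane graph whose weak dual is `C₄` and whose four interior faces all have
length `t`.) -/
theorem c4_sandpile_group (t : ℤ) (ht : 3 ≤ t) :
    (c4Matrix t).det = t ^ 4 - 4 * t ^ 2 ∧
    Nonempty (((Fin 4 → ℤ) ⧸ LinearMap.range (c4Matrix t).mulVecLin) ≃+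
      (ZMod (Int.gcd (2 * t) (t ^ 2)) ×
        ZMod (((t ^ 4 - 4 * t ^ 2) / (Int.gcd (2 * t) (t ^ 2) : ℤ)).toNat))) ∧
    ¬ IsAddCyclic ((Fin 4 → ℤ) ⧸ LinearMap.range (c4Matrix t).mulVecLin) := by
  set g := Int.gcd (2 * t) (t ^ 2)
  have ht_dvd : t ∣ (g : ℤ) := Int.dvd_coe_gcd (dvd_mul_left t 2) (dvd_pow_self t two_ne_zero)
  have hg : 0 < g := Int.gcd_pos_of_ne_zero_left _ (by omega)
  obtain ⟨k, l, hkl, hk, hl⟩ := Int.exists_gcd_one hg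
  obtain ⟨u, v, huv⟩ := Int.isCoprime_iff_gcd_eq_one.mpr hkl
  have hq : (t ^ 4 - 4 * t ^ 2) / (g : ℤ) = (l ^ 2 - k ^ 2) * g := by
    rw [show t ^ 4 - 4 * t ^ 2 = (t ^ 2) ^ 2 - (2 * t) ^ 2 by ring]
    exact sq_sub_sq_ediv_of_eq_mul hl hk (by positivity)
  have hq_nonneg : 0 ≤ (t ^ 4 - 4 * t ^ 2) / (g : ℤ) :=
    Int.ediv_nonneg (by nlinarith [mul_le_mul ht ht (by norm_num) (by omega)]) g.cast_nonneg
  have hn : ((t ^ 4 - 4 * t ^ 2) / (g : ℤ)).toNat = ((l ^ 2 - k ^ 2) * g).natAbs := by omega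
  let e : (c4Matrix t).coker ≃+ ZMod g × ZMod ((l ^ 2 - k ^ 2) * g).natAbs :=
    ((cokerC4MatrixEquiv t).trans (cokerCirculantEquiv hl hk huv)).toAddEquiv.trans
      (cokerDiagonalFinTwoEquiv _ _)
  refine ⟨det_c4Matrix t, hn ▸ ⟨e⟩, fun h ↦ not_isAddCyclic_zmod_prod_of_dvd ?_ ?_
    (isAddCyclic_of_surjective e e.surjective)⟩
  · intro hg_one
    rw [hg_one, Nat.cast_one] at ht_dvd
    linarith [Int.le_of_dvd one_pos ht_dvd]
  · rw [Int.natAbs_mul, Int.natAbs_natCast]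
    exact dvd_mul_left _ _
end
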